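/- For positive integers p > m and real f not a nonpositive integer, ∑_{n=0}^∞ ((1/2)_n)^2 (f+m)_n / ((p+1)_n (f)_n n!) = (p! Γ(p) / Γ(p+1/2)^2) · ∑_{k=0}^m (−1)^k binom(m,k) ((1/2)_k)^2 / ((f)_k (1−p)_k). -/

import Mathlib

open Real BigOperators

noncomputable def poch (a : ℝ) (n : ℕ) : ℝ := ∏ i ∈ Finset.range n, (a + i)

noncomputable def digamma (x : ℝ) : ℝ := deriv Real.Gamma x / Real.Gamma x

/-!
Write `(f+m)_n / (f)_n = (f+n)_m / (f)_m` and expand `(f+n)_m` by Chu–Vandermonde in the falling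
factorials `n(n-1)⋯(n-k+1)`, `k ≤ m`. Against the weight `((1/2)_n)² / ((p+1)_n n!)` the falling
factorial shifts the parameters to `₂F₁(1/2+k, 1/2+k; p+k+1; 1)`, whose excess `p-k` is a positive
integer, so Gauss's summation theorem evaluates it; `Γ(p-k) (1-p)_k = (-1)^k Γ(p)` then gives the
right-hand side. Gauss's theorem for integer excess `N ≥ 1` is proved by induction on `N`: the
contiguous relation `c ↦ c+1` holds for partial sums up to a boundary term `M (c+M) t_M`, with
`t_M` the `M`-th term of `₂F₁(a, b; c+1; 1)`, whose limit is read off from Euler's limit formula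
for `Γ`.
-/

open Filter Topology Finset
open scoped Nat

@[simp] lemma poch_zero (a : ℝ) : poch a 0 = 1 := by simp [poch]

lemma poch_succ (a : ℝ) (n : ℕ) : poch a (n + 1) = poch a n * (a + n) :=
  prod_range_succ _ _

lemma poch_add (a : ℝ) (m n : ℕ) : poch a (m + n) = poch a m * poch (a + m) n := by
  simp only [poch, prod_range_add, Nat.cast_add, add_assoc]

lemma poch_succ' (a : ℝ) (n : ℕ) : poch a (n + 1) = a * poch (a + 1) n := by
  rw [Nat.add_comm, poch_add]; simp [poch]

lemma poch_pos {a : ℝ} (ha : 0 < a) (n : ℕ) : 0 < poch a n :=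
  prod_pos fun i _ => by positivity

lemma poch_ne_zero {a : ℝ} (ha : ∀ i : ℕ, a ≠ -i) (n : ℕ) : poch a n ≠ 0 :=
  prod_ne_zero_iff.2 fun i _ h => ha i (eq_neg_of_add_eq_zero_left h)

lemma Gamma_add_nat {a : ℝ} (ha : 0 < a) (n : ℕ) : Gamma (a + n) = Gamma a * poch a n := by
  induction n with
  | zero => simp
  | succ n ih =>
    rw [Nat.cast_succ, ← add_assoc, Gamma_add_one (by positivity), ih, poch_succ]; ring

lemma poch_one_sub_mul_Gamma_sub {x : ℝ} {k : ℕ} (hk : (k : ℝ) < x) :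
    poch (1 - x) k * Gamma (x - k) = (-1) ^ k * Gamma x := by
  induction k with
  | zero => simp
  | succ k ih =>
    push_cast at hk
    have hGamma : Gamma (x - k) = (x - k - 1) * Gamma (x - (k + 1)) := by
      rw [show x - k = x - (k + 1) + 1 by ring, Gamma_add_one (by linarith)]; ring
    rw [poch_succ, pow_succ]
    push_cast
    linear_combination (-1) * ih (by linarith) + poch (1 - x) k * hGamma

lemma poch_add_eq_sum (f x : ℝ) (m : ℕ) :
    poch (f + x) m = ∑ k ∈ range (m + 1),
      (m.choose k : ℝ) * ((descPochhammer ℝ k).eval x * poch (f + k) (m - k)) := by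
  induction m generalizing f with
  | zero => simp
  | succ m ih =>
    rw [sum_choose_succ_mul (fun i j => (descPochhammer ℝ i).eval x * poch (f + i) j),
      poch_succ', add_right_comm, ih, mul_sum, ← sum_add_distrib]
    refine sum_congr rfl fun i hi => ?_
    rw [show m + 1 - i = m - i + 1 by grind, poch_succ', descPochhammer_succ_eval]
    push_cast
    ring_nf

/-- The `n`-th term of `₂F₁(a, b; c; 1)`. -/
noncomputable def hgCoeff (a b c : ℝ) (n : ℕ) : ℝ := poch a n * poch b n / (poch c n * n !)

section HgCoeff

variable {a b c : ℝ}

lemma hgCoeff_nonneg (ha : 0 < a) (hb : 0 < b) (hc : 0 < c) (n : ℕ) : 0 ≤ hgCoeff a b c n := by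
  have := poch_pos ha n
  have := poch_pos hb n
  have := poch_pos hc n
  unfold hgCoeff
  positivity

lemma hgCoeff_succ (hc : 0 < c) (n : ℕ) :
    hgCoeff a b c (n + 1) * ((c + n) * (n + 1)) = hgCoeff a b c n * ((a + n) * (b + n)) := by
  have := (poch_pos hc n).ne'
  have : c + n ≠ 0 := by positivity
  simp only [hgCoeff, poch_succ, Nat.factorial_succ, Nat.cast_mul, Nat.cast_succ]
  field_simp

lemma hgCoeff_mul_self (hc : 0 < c) (n : ℕ) :
    hgCoeff a b c n * c = hgCoeff a b (c + 1) n * (c + n) := by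
  have := (poch_pos hc n).ne'
  have := (poch_pos (by linarith : 0 < c + 1) n).ne'
  have hshift : c * poch (c + 1) n = poch c n * (c + n) := by rw [← poch_succ', poch_succ]
  have : (n ! : ℝ) ≠ 0 := by positivity
  unfold hgCoeff
  rw [div_mul_eq_mul_div, div_mul_eq_mul_div, div_eq_div_iff (by positivity) (by positivity)]
  linear_combination poch a n * poch b n * (n ! : ℝ) * hshift

lemma descFactorial_mul_hgCoeff_add (j k : ℕ) :
    (j + k).descFactorial k * hgCoeff a b c (j + k) =
      poch a k * poch b k / poch c k * hgCoeff (a + k) (b + k) (c + k) j := by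
  have hfac : ((k + j) ! : ℝ) = j ! * (k + j).descFactorial k := by
    rw [add_comm k j]
    have := Nat.factorial_mul_descFactorial (Nat.le_add_left k j)
    rw [Nat.add_sub_cancel] at this
    exact_mod_cast this.symm
  simp only [hgCoeff, add_comm j k, poch_add, hfac]
  field_simp

lemma sum_range_hgCoeff_add_one (hc : 0 < c) (M : ℕ) :
    (c - a) * (c - b) * ∑ n ∈ range M, hgCoeff a b (c + 1) n =
      c * (c - a - b) * ∑ n ∈ range M, hgCoeff a b c n + M * (c + M) * hgCoeff a b (c + 1) M := by
  induction M with
  | zero => simp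
  | succ M ih =>
    have hstep := hgCoeff_succ (a := a) (b := b) (by linarith : 0 < c + 1) M
    rw [sum_range_succ, sum_range_succ, mul_add, ih]
    push_cast
    linear_combination (-(c - a - b)) * hgCoeff_mul_self (a := a) (b := b) hc M - hstep

end HgCoeff

section Asymptotics

variable {a b c : ℝ}

lemma tendsto_poch_div_factorial_mul_rpow (ha : 0 < a) :
    Tendsto (fun M : ℕ => poch a M / (M ! * (M : ℝ) ^ (a - 1))) atTop (𝓝 (Gamma a)⁻¹) := by
  have hlim := ((GammaSeq_tendsto_Gamma a).inv₀ (Gamma_pos_of_pos ha).ne').mul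
    (tendsto_natCast_div_add_atTop a)
  rw [mul_one] at hlim
  refine hlim.congr' ?_
  filter_upwards [eventually_ge_atTop 1] with M hM
  have hM : (0 : ℝ) < M := by exact_mod_cast hM
  have hpow : (M : ℝ) ^ a = (M : ℝ) ^ (a - 1) * M := by
    rw [← rpow_add_one hM.ne', sub_add_cancel]
  have := poch_pos ha M
  rw [GammaSeq, ← poch, poch_succ, hpow]
  field_simp
  ring

lemma tendsto_hgCoeff_mul_rpow (ha : 0 < a) (hb : 0 < b) (hc : 0 < c) :
    Tendsto (fun M : ℕ => hgCoeff a b c M * (M : ℝ) ^ (c + 1 - a - b)) atTop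
      (𝓝 (Gamma c / (Gamma a * Gamma b))) := by
  have hlim := ((tendsto_poch_div_factorial_mul_rpow ha).mul
    (tendsto_poch_div_factorial_mul_rpow hb)).div (tendsto_poch_div_factorial_mul_rpow hc)
    (inv_ne_zero (Gamma_pos_of_pos hc).ne')
  rw [← mul_inv, inv_div_inv] at hlim
  refine hlim.congr' ?_
  filter_upwards [eventually_ge_atTop 1] with M hM
  have hM : (0 : ℝ) < M := by exact_mod_cast hM
  have hpow : (M : ℝ) ^ (a - 1) * (M : ℝ) ^ (b - 1) * (M : ℝ) ^ (c + 1 - a - b) =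
      (M : ℝ) ^ (c - 1) := by
    rw [← rpow_add hM, ← rpow_add hM]; ring_nf
  have := poch_pos hc M
  simp only [hgCoeff, Pi.div_apply]
  field_simp
  rw [← hpow]
  ring

lemma tendsto_mul_hgCoeff_add_one_mul_rpow (ha : 0 < a) (hb : 0 < b) (hc : 0 < c) :
    Tendsto (fun M : ℕ => M * (c + M) * hgCoeff a b (c + 1) M * (M : ℝ) ^ (c - a - b)) atTop
      (𝓝 (Gamma (c + 1) / (Gamma a * Gamma b))) := by
  have hlim := (tendsto_hgCoeff_mul_rpow ha hb (by linarith : 0 < c + 1)).mul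
    ((tendsto_const_div_atTop_nhds_zero_nat c).const_add 1)
  rw [add_zero, mul_one] at hlim
  refine hlim.congr' ?_
  filter_upwards [eventually_ge_atTop 1] with M hM
  have hM : (0 : ℝ) < M := by exact_mod_cast hM
  have hpow : (M : ℝ) ^ (c + 1 + 1 - a - b) = (M : ℝ) ^ (c - a - b) * M ^ 2 := by
    rw [← rpow_natCast, ← rpow_add hM]; ring_nf
  rw [hpow]
  field_simp
  ring

end Asymptotics

section Gauss

variable {a b : ℝ}

lemma hasSum_hgCoeff_add_one_of_tendsto {c G L : ℝ} (ha : 0 < a) (hb : 0 < b) (hc : a + b ≤ c)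
    (hG : Tendsto (fun M : ℕ => c * (c - a - b) * ∑ n ∈ range M, hgCoeff a b c n) atTop (𝓝 G))
    (hL : Tendsto (fun M : ℕ => M * (c + M) * hgCoeff a b (c + 1) M) atTop (𝓝 L)) :
    HasSum (hgCoeff a b (c + 1)) ((G + L) / ((c - a) * (c - b))) := by
  have hc0 : 0 < c := by linarith
  rw [hasSum_iff_tendsto_nat_of_nonneg (hgCoeff_nonneg ha hb (by linarith))]
  refine ((hG.add hL).div_const _).congr fun M => ?_
  rw [← sum_range_hgCoeff_add_one hc0, mul_div_cancel_left₀]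
  exact (mul_pos (by linarith) (by linarith)).ne'

theorem hasSum_hgCoeff_add_add_one (ha : 0 < a) (hb : 0 < b) :
    HasSum (hgCoeff a b (a + b + 1)) (Gamma (a + b + 1) / (Gamma (a + 1) * Gamma (b + 1))) := by
  have hzero : a + b - a - b = 0 := by ring
  have hlim := tendsto_mul_hgCoeff_add_one_mul_rpow ha hb (add_pos ha hb)
  simp only [hzero, rpow_zero, mul_one] at hlim
  -- `₂F₁(a, b; a + b; 1)` diverges, but its partial sums enter with the factor `c - a - b = 0`.
  have hG : Tendsto (fun M : ℕ => (a + b) * (a + b - a - b) * ∑ n ∈ range M, hgCoeff a b (a + b) n)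
      atTop (𝓝 0) := by
    simp only [hzero, mul_zero, zero_mul, tendsto_const_nhds]
  convert hasSum_hgCoeff_add_one_of_tendsto ha hb le_rfl hG hlim using 1
  rw [zero_add, add_sub_cancel_left, add_sub_cancel_right]
  have := (Gamma_pos_of_pos ha).ne'
  have := (Gamma_pos_of_pos hb).ne'
  have := ha.ne'
  have := hb.ne'
  rw [Gamma_add_one ha.ne', Gamma_add_one hb.ne']
  field_simp

theorem HasSum.hgCoeff_add_one {c g : ℝ} (ha : 0 < a) (hb : 0 < b) (hc : a + b < c)
    (hg : HasSum (hgCoeff a b c) g) :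
    HasSum (hgCoeff a b (c + 1)) (c * (c - a - b) * g / ((c - a) * (c - b))) := by
  have hd : 0 < c - a - b := by linarith
  have hlim := (tendsto_mul_hgCoeff_add_one_mul_rpow ha hb (by linarith : 0 < c)).mul
    ((tendsto_rpow_neg_atTop hd).comp tendsto_natCast_atTop_atTop)
  rw [mul_zero] at hlim
  have hL : Tendsto (fun M : ℕ => M * (c + M) * hgCoeff a b (c + 1) M) atTop (𝓝 0) := by
    refine hlim.congr' ?_
    filter_upwards [eventually_ge_atTop 1] with M hM
    have hM : (0 : ℝ) < M := by exact_mod_cast hM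
    simp only [Function.comp_apply, rpow_neg hM.le]
    field_simp
  simpa using hasSum_hgCoeff_add_one_of_tendsto ha hb hc.le (hg.tendsto_sum_nat.const_mul _) hL

theorem hasSum_hgCoeff_add_nat (ha : 0 < a) (hb : 0 < b) {N : ℕ} (hN : 1 ≤ N) :
    HasSum (hgCoeff a b (a + b + N))
      (Gamma (a + b + N) * Gamma N / (Gamma (a + N) * Gamma (b + N))) := by
  induction N, hN using Nat.le_induction with
  | base => simpa using hasSum_hgCoeff_add_add_one ha hb
  | succ N hN ih =>
    have hN' : (0 : ℝ) < N := by exact_mod_cast hN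
    have := ih.hgCoeff_add_one ha hb (by linarith)
    rw [show a + b + N - a - b = (N : ℝ) by ring, show a + b + N - a = b + N by ring,
      show a + b + N - b = a + N by ring] at this
    push_cast
    simp only [← add_assoc]
    rw [Gamma_add_one (by positivity), Gamma_add_one (by positivity), Gamma_add_one (by positivity),
      Gamma_add_one (by positivity)]
    convert this using 1
    have := (Gamma_pos_of_pos (by positivity : 0 < a + N)).ne'
    have := (Gamma_pos_of_pos (by positivity : 0 < b + N)).ne'
    have : 0 < a + N := by positivity
    have : 0 < b + N := by positivity
    field_simp

end Gauss

lemma HasSum.descFactorial_mul_hgCoeff {a b c g : ℝ} (k : ℕ)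
    (h : HasSum (hgCoeff (a + k) (b + k) (c + k)) g) :
    HasSum (fun n : ℕ => n.descFactorial k * hgCoeff a b c n)
      (poch a k * poch b k / poch c k * g) := by
  rw [← hasSum_nat_add_iff' k]
  have hvanish : ∑ i ∈ range k, (i.descFactorial k : ℝ) * hgCoeff a b c i = 0 :=
    sum_eq_zero fun i hi => by simp [Nat.descFactorial_eq_zero_iff_lt.2 (mem_range.1 hi)]
  simpa only [hvanish, sub_zero, descFactorial_mul_hgCoeff_add] using h.mul_left _

lemma poch_add_nat_div_poch {f : ℝ} (hf : ∀ i : ℕ, f ≠ -i) (m n : ℕ) :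
    poch (f + m) n / poch f n =
      ∑ k ∈ range (m + 1), m.choose k * poch (f + k) (m - k) / poch f m * n.descFactorial k := by
  have hswap : poch f m * poch (f + m) n = poch f n * poch (f + n) m := by
    rw [← poch_add, ← poch_add, add_comm]
  have hratio : poch (f + m) n / poch f n = poch (f + n) m / poch f m := by
    rw [div_eq_div_iff (poch_ne_zero hf n) (poch_ne_zero hf m)]
    linear_combination hswap
  rw [hratio, poch_add_eq_sum, sum_div]
  refine sum_congr rfl fun k _ => ?_
  rw [descPochhammer_eval_eq_descFactorial]
  ring

lemma hasSum_descFactorial_mul_hgCoeff_half {p k : ℕ} (hk : k < p) :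
    HasSum (fun n : ℕ => n.descFactorial k * hgCoeff (1 / 2) (1 / 2) (p + 1) n)
      (p ! * Gamma p / Gamma (p + 1 / 2) ^ 2 * ((-1) ^ k * poch (1 / 2) k ^ 2 / poch (1 - p) k)) := by
  have hgauss := hasSum_hgCoeff_add_nat (a := 1 / 2 + k) (b := 1 / 2 + k) (by positivity)
    (by positivity) (N := p - k) (by omega)
  rw [Nat.cast_sub hk.le, show (1 / 2 + k + (1 / 2 + k) + (p - k) : ℝ) = p + 1 + k by ring,
    show (1 / 2 + k + (p - k) : ℝ) = p + 1 / 2 by ring] at hgauss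
  convert hgauss.descFactorial_mul_hgCoeff k using 1
  have hreflect := poch_one_sub_mul_Gamma_sub (x := p) (k := k) (by exact_mod_cast hk)
  have hGp : 0 < Gamma p := Gamma_pos_of_pos (by exact_mod_cast (show 0 < p by omega))
  have hpoch : poch (1 - p) k ≠ 0 := fun h =>
    mul_ne_zero (pow_ne_zero _ (neg_ne_zero.2 one_ne_zero)) hGp.ne' (by rw [← hreflect, h, zero_mul])
  have hGamma : Gamma (p - k) = (-1) ^ k * Gamma p / poch (1 - p) k := by
    rw [eq_div_iff hpoch, mul_comm, hreflect]
  have := (poch_pos (by positivity : (0 : ℝ) < p + 1) k).ne'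
  have := (Gamma_pos_of_pos (by positivity : (0 : ℝ) < p + 1 / 2)).ne'
  rw [Gamma_add_nat (by positivity), Gamma_nat_eq_factorial, hGamma]
  field_simp

theorem stmt19_general (p m : ℕ) (hpm : m < p) (f : ℝ)
    (hf : ∀ n : ℕ, f ≠ -(n : ℝ)) :
    ∑' n : ℕ, (poch (1/2) n) ^ 2 * poch (f + m) n /
        (poch ((p : ℝ) + 1) n * poch f n * n.factorial) =
      (p.factorial : ℝ) * Real.Gamma p / Real.Gamma (p + 1/2) ^ 2 *
        ∑ k ∈ Finset.range (m + 1),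
          (-1 : ℝ) ^ k * (m.choose k) * (poch (1/2) k) ^ 2 /
            (poch f k * poch (1 - (p : ℝ)) k) := by
  have hterm : ∀ n : ℕ, poch (1/2) n ^ 2 * poch (f + m) n /
      (poch ((p : ℝ) + 1) n * poch f n * n !) = ∑ k ∈ range (m + 1),
        m.choose k * poch (f + k) (m - k) / poch f m *
          (n.descFactorial k * hgCoeff (1 / 2) (1 / 2) (p + 1) n) := by
    intro n
    rw [show poch (1/2) n ^ 2 * poch (f + m) n / (poch ((p : ℝ) + 1) n * poch f n * n !) =
      hgCoeff (1 / 2) (1 / 2) (p + 1) n * (poch (f + m) n / poch f n) by unfold hgCoeff; ring,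
      poch_add_nat_div_poch hf, mul_sum]
    exact sum_congr rfl fun k _ => by ring
  have hsum := hasSum_sum (s := range (m + 1)) fun k hk => (hasSum_descFactorial_mul_hgCoeff_half
    (p := p) (k := k) (by grind)).mul_left (m.choose k * poch (f + k) (m - k) / poch f m)
  rw [funext hterm, hsum.tsum_eq, mul_sum]
  refine sum_congr rfl fun k hk => ?_
  have hsplit : poch f m = poch f k * poch (f + k) (m - k) := by
    rw [← poch_add, Nat.add_sub_cancel' (by grind)]
  have hfm := poch_ne_zero hf m
  rw [hsplit] at hfm ⊢
  obtain ⟨hfk, hfk'⟩ := mul_ne_zero_iff.1 hfm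
  field_simp

theorem stmt19 (p m : ℕ) (hm : 1 ≤ m) (hpm : m < p) (f : ℝ)
    (hf : ∀ n : ℕ, f ≠ -(n : ℝ)) :
    ∑' n : ℕ, (poch (1/2) n) ^ 2 * poch (f + m) n /
        (poch ((p : ℝ) + 1) n * poch f n * n.factorial) =
      (p.factorial : ℝ) * Real.Gamma p / Real.Gamma (p + 1/2) ^ 2 *
        ∑ k ∈ Finset.range (m + 1),
          (-1 : ℝ) ^ k * (m.choose k) * (poch (1/2) k) ^ 2 /
            (poch f k * poch (1 - (p : ℝ)) k) :=
  stmt19_general p m hpm f hf
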